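/- arXiv:2102.12722 — 3 statements merged into one kernel-verified Lean document; each statement's English description precedes it below -/
import Mathlib

section
/- Let Δ > 0, B ≥ 0, and let f⁻¹ be a positive real number (denoting f⁻¹(Δ)). Define ψ = (8B·f⁻¹ + 6 log t)/(f⁻¹)². Then for any integer K > ψ, it holds that sqrt(3 log t / (2K)) + B/K < f⁻¹ / 2 + f⁻¹ / 2 = f⁻¹, provided t ≥ 1. -/
/-- with `ψ = (8 B f⁻¹ + 6 log t)/(f⁻¹)²`, if `K > ψ` then
`√(3 log t/(2K)) + B/K < f⁻¹` (for `t ≥ 1`). -/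
theorem stmt_2 (Δ : ℝ) (hΔ : 0 < Δ) (B : ℝ) (hB : 0 ≤ B)
    (finv : ℝ) (hfinv : 0 < finv) (t : ℝ) (ht : 1 ≤ t)
    (K : ℕ) (hK : (K : ℝ) > (8 * B * finv + 6 * Real.log t) / finv ^ 2) :
    Real.sqrt (3 * Real.log t / (2 * K)) + B / K < finv / 2 + finv / 2 := by
  have hL : 0 ≤ Real.log t := Real.log_nonneg ht
  have hKpos : (0:ℝ) < K := lt_of_le_of_lt (by positivity) hK
  have hK' : 8 * B * finv + 6 * Real.log t < K * finv ^ 2 :=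
    (div_lt_iff₀ (by positivity)).mp hK
  have h1 : Real.sqrt (3 * Real.log t / (2 * K)) < finv / 2 := by
    rw [show finv / 2 = Real.sqrt ((finv / 2) ^ 2) by
      rw [Real.sqrt_sq (by positivity)]]
    apply Real.sqrt_lt_sqrt (by positivity)
    rw [div_lt_iff₀ (by positivity)]
    nlinarith
  have h2 : B / K < finv / 2 := by
    rw [div_lt_iff₀ hKpos]
    nlinarith
  linarith
end

section
/- Let δ > 0 and suppose at some round t the UCB indices satisfy: optimal arm index I_{i*}(t) ≥ μ_{i*} (lower-bounded by its true mean, on the concentration event) and the strategic arm's clean-index upper bound is I_i^{clean}(t) ≤ μ_i + 2·sqrt(2 log(K_i²/η²)/K_i). If the strategic arm's corrupted index exceeds the optimal arm's index, then the cumulative manipulation ρ_i spent so far satisfies ρ_i/K_i ≥ δ - 2·sqrt(2 log(K_i²/η²)/K_i), i.e., ρ_i ≥ K_i·δ - 2·sqrt(2 K_i log(K_i²/η²)), where δ = μ_{i*} - μ_i. -/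
/-! The corruption enters the strategic arm's index only through the additive term `ρ/K`.
Chaining `μ⋆ ≤ I⋆ < μ̂ + ρ/K + r ≤ μᵢ + ρ/K + 2r` forces `ρ/K > δ - 2r`; multiplying by `K`
and using `K √(x/K) = √(K x)` gives the bound on `ρ`. -/

open Real

theorem Real.mul_sqrt_div_self {K : ℝ} (hK : 0 ≤ K) (x : ℝ) : K * √(x / K) = √(K * x) := by
  rcases hK.eq_or_lt with rfl | hK
  · simp
  · rw [show K * x = K ^ 2 * (x / K) by field_simp, Real.sqrt_mul (sq_nonneg K),
      Real.sqrt_sq hK.le]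

theorem gap_sub_two_radius_lt_of_index_lt {μstar μi Istar μhat ρ r : ℝ}
    (hIstar : μstar ≤ Istar) (hclean : μhat ≤ μi + r) (hexceed : Istar < μhat + ρ + r) :
    μstar - μi - 2 * r < ρ := by
  linarith

theorem stmt_17_general (μstar μi η ρ Istar μhat : ℝ) (K : ℕ) (hK : 1 ≤ K)
    (hIstar : μstar ≤ Istar)
    (hclean : μhat ≤ μi + Real.sqrt (2 * Real.log ((K : ℝ) ^ 2 / η ^ 2) / K))
    (hexceed : Istar < μhat + ρ / K + Real.sqrt (2 * Real.log ((K : ℝ) ^ 2 / η ^ 2) / K)) :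
    ρ / K ≥ (μstar - μi) - 2 * Real.sqrt (2 * Real.log ((K : ℝ) ^ 2 / η ^ 2) / K) ∧
    ρ ≥ K * (μstar - μi) - 2 * Real.sqrt (2 * K * Real.log ((K : ℝ) ^ 2 / η ^ 2)) := by
  have hKpos : (0 : ℝ) < K := by exact_mod_cast hK
  set L := Real.log ((K : ℝ) ^ 2 / η ^ 2)
  have hmean : μstar - μi - 2 * √(2 * L / K) < ρ / K :=
    gap_sub_two_radius_lt_of_index_lt hIstar hclean hexceed
  refine ⟨hmean.le, ?_⟩
  have hradius : K * √(2 * L / K) = √(2 * K * L) := by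
    rw [Real.mul_sqrt_div_self hKpos.le, ← mul_assoc, mul_comm (K : ℝ) 2]
  calc K * (μstar - μi) - 2 * √(2 * K * L)
      = K * (μstar - μi - 2 * √(2 * L / K)) := by rw [← hradius]; ring
    _ ≤ K * (ρ / K) := by gcongr
    _ = ρ := by field_simp

/-- core index-comparison inequality. If the optimal arm's index is at
least its true mean `μ⋆`, the strategic arm's clean empirical mean satisfies
`μ̂ ≤ μᵢ + √(2 log(K²/η²)/K)`, and the corrupted index
`μ̂ + ρ/K + √(2 log(K²/η²)/K)` exceeds the optimal arm's index, then
`ρ/K ≥ δ - 2 √(2 log(K²/η²)/K)` and `ρ ≥ K δ - 2 √(2 K log(K²/η²))`,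
where `δ = μ⋆ - μᵢ`. -/
theorem stmt_17 (μstar μi η ρ Istar μhat : ℝ) (K : ℕ) (hK : 1 ≤ K)
    (hη : 0 < η) (hδ : 0 < μstar - μi) (hρ : 0 ≤ ρ)
    (hIstar : μstar ≤ Istar)
    (hclean : μhat ≤ μi + Real.sqrt (2 * Real.log ((K : ℝ) ^ 2 / η ^ 2) / K))
    (hexceed : Istar < μhat + ρ / K + Real.sqrt (2 * Real.log ((K : ℝ) ^ 2 / η ^ 2) / K)) :
    ρ / K ≥ (μstar - μi) - 2 * Real.sqrt (2 * Real.log ((K : ℝ) ^ 2 / η ^ 2) / K) ∧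
    ρ ≥ K * (μstar - μi) - 2 * Real.sqrt (2 * K * Real.log ((K : ℝ) ^ 2 / η ^ 2)) :=
  stmt_17_general μstar μi η ρ Istar μhat K hK hIstar hclean hexceed
end

section
/- Suppose the concentration event E_t holds at round t: |μ̃_{i,t-1} - μ_i| ≤ Λ_{i,t} for all i, where Λ_{i,t} = sqrt(3 log t/(2 K_{i,t-1})) + ρ_{i,t-1}/K_{i,t-1}. Suppose further every i ∈ S_t has K_{i,t-1} > ψ_t so that Λ'_{i,t} := sqrt(3 log t/(2K_{i,t-1})) + B_max/K_{i,t-1} < f⁻¹(Δ_min)/2, and the oracle did not fail (r_μ̄(S_t) ≥ α·OPT_μ̄ for μ̄ the SCUCB index vector). Then, under monotonicity and bounded smoothness of r with function f, S_t ∉ S_B. Equivalently, P({¬F_t, E_t, S_t ∈ S_B, K_{i,t-1} > ψ_t ∀i ∈ S_t}) = 0. -/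
/-- on the concentration event, if every arm in the played set `S_t` is
well-sampled so that its SCUCB bonus `Λ'ᵢ < f⁻¹(Δ_min)/2`, and the oracle did not fail
(`r_{μ̄}(S_t) ≥ α·OPT_{μ̄}` for the SCUCB index vector `μ̄ᵢ = μ̃ᵢ + Λ'ᵢ`), then under
monotonicity and bounded smoothness `S_t` is not a suboptimal set, i.e. the event
`{¬F_t, E_t, S_t ∈ S_B, K_{i,t-1} > ψ_t ∀ i ∈ S_t}` is empty. -/
theorem stmt_19 (m : ℕ) (𝒮 : Finset (Finset (Fin m))) (h𝒮 : 𝒮.Nonempty)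
    (r : (Fin m → ℝ) → Finset (Fin m) → ℝ)
    (hmono : ∀ ν ν' : Fin m → ℝ, (∀ i, ν i ≤ ν' i) → ∀ S, r ν S ≤ r ν' S)
    (f : ℝ → ℝ) (hf : StrictMono f)
    (hsmooth : ∀ ν ν' : Fin m → ℝ, ∀ S : Finset (Fin m), ∀ Λ : ℝ,
      (∀ i ∈ S, |ν i - ν' i| ≤ Λ) → |r ν S - r ν' S| ≤ f Λ)
    (α : ℝ) (hα0 : 0 < α) (hα1 : α ≤ 1)
    (μ μtil Λ Λ' : Fin m → ℝ)
    (hE : ∀ i, |μtil i - μ i| ≤ Λ i)          -- concentration event E_t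
    (hΛ0 : ∀ i, 0 ≤ Λ i) (hΛΛ' : ∀ i, Λ i ≤ Λ' i)
    (Δmin finvΔmin : ℝ) (hΔmin : 0 < Δmin) (hfinv : f finvΔmin = Δmin)
    (hΔdef : ∀ S ∈ 𝒮, r μ S < α * 𝒮.sup' h𝒮 (r μ) →
      r μ S ≤ α * 𝒮.sup' h𝒮 (r μ) - Δmin)
    (St : Finset (Fin m)) (hSt : St ∈ 𝒮)
    (hwell : ∀ i ∈ St, Λ' i < finvΔmin / 2)   -- K_{i,t-1} > ψ_t gives small bonuses
    (horacle : α * 𝒮.sup' h𝒮 (r (fun i => μtil i + Λ' i))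
      ≤ r (fun i => μtil i + Λ' i) St) :      -- ¬F_t
    ¬ r μ St < α * 𝒮.sup' h𝒮 (r μ) := by
  intro hlt
  set μbar : Fin m → ℝ := fun i => μtil i + Λ' i with hμbar
  have hsub : r μ St ≤ α * 𝒮.sup' h𝒮 (r μ) - Δmin := hΔdef St hSt hlt
  have hμle : ∀ i, μ i ≤ μbar i := by
    intro i
    have h1 := (abs_le.mp (hE i)).1
    have h2 := hΛΛ' i
    simp only [hμbar]
    linarith
  have hsup : 𝒮.sup' h𝒮 (r μ) ≤ 𝒮.sup' h𝒮 (r μbar) := by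
    apply Finset.sup'_le
    intro S hS
    exact le_trans (hmono μ μbar hμle S) (Finset.le_sup' (r μbar) hS)
  -- find Λ* with f Λ* < Δmin bounding |μbar i - μ i| on St
  obtain ⟨Λs, hΛsb, hΛslt⟩ :
      ∃ Λs : ℝ, (∀ i ∈ St, |μbar i - μ i| ≤ Λs) ∧ f Λs < Δmin := by
    rcases St.eq_empty_or_nonempty with h | hne
    · refine ⟨finvΔmin - 1, by simp [h], ?_⟩
      rw [← hfinv]; exact hf (by linarith)
    · refine ⟨St.sup' hne (fun i => 2 * Λ' i), ?_, ?_⟩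
      · intro i hi
        have h1 := abs_le.mp (hE i)
        have h2 := hΛΛ' i
        have h3 : |μbar i - μ i| ≤ 2 * Λ' i := by
          simp only [hμbar]
          rw [abs_le]; constructor <;> [linarith [h1.1, hΛ0 i]; linarith [h1.2]]
        exact h3.trans (Finset.le_sup' (fun i => 2 * Λ' i) hi)
      · rw [← hfinv]
        apply hf
        rw [Finset.sup'_lt_iff]
        intro i hi
        have := hwell i hi
        linarith
  have hclose : |r μbar St - r μ St| ≤ f Λs := hsmooth μbar μ St Λs hΛsb
  have h1 : r μbar St < r μ St + Δmin := by
    have := (abs_le.mp hclose).2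
    linarith
  have h2 : α * 𝒮.sup' h𝒮 (r μ) ≤ r μbar St := le_trans (by nlinarith) horacle
  linarith
end
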